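/- Let I be a finite index set and w : I → ℝ≥0 a family of nonnegative weights. For each i ∈ I let α_i and β_i be standard Borel measurable spaces, ρ_i and σ_i probability measures on α_i, η_i a Markov kernel from α_i to β_i (the true conditional distribution), and κ_i a Markov kernel from α_i to β_i (an imputation's conditional distribution). Then ∑_{i ∈ I} w_i · klDiv(ρ_i ⊗ₘ η_i, σ_i ⊗ₘ η_i) ≤ ∑_{i ∈ I} w_i · klDiv(ρ_i ⊗ₘ κ_i, σ_i ⊗ₘ η_i), as an inequality of extended nonnegative reals. Equivalently, the density ratio I-Score S*(H, P) = −E_{A,M_A}[klDiv(imputation distribution on projection A and pattern M_A, distribution of fully observed cases on A)] satisfies S*(H, P) ≤ S*(P*, P) for every compatible imputation distribution H, i.e., it is a proper imputation score. (Proposition 4.1.) -/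

import Mathlib

open MeasureTheory ProbabilityTheory Real
open scoped ENNReal NNReal ProbabilityTheory Classical

/-- Kullback–Leibler divergence of `μ` with respect to `ν`: `∫ log (dμ/dν) dμ` if `μ ≪ ν` and
the log-likelihood ratio is integrable, and `∞` otherwise. -/
noncomputable def klDiv {α : Type*} [MeasurableSpace α] (μ ν : Measure α) : ℝ≥0∞ :=
  if μ ≪ ν ∧ Integrable (llr μ ν) μ then ENNReal.ofReal (∫ x, llr μ ν x ∂μ) else ∞

/-!
By the chain rule, `KL(ρ ⊗ₘ κ ‖ σ ⊗ₘ η) = KL(ρ ‖ σ) + KL(ρ ⊗ₘ κ ‖ ρ ⊗ₘ η) ≥ KL(ρ ‖ σ)`,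
while composing both marginals with the same kernel leaves the divergence unchanged:
`KL(ρ ⊗ₘ η ‖ σ ⊗ₘ η) = KL(ρ ‖ σ)`. So each summand on the left is at most the corresponding
summand on the right.
-/

section

variable {𝓧 𝓨 : Type*} [MeasurableSpace 𝓧] [MeasurableSpace 𝓨]

/-- Mathlib's `InformationTheory.klDiv` carries the correction term `ν univ - μ univ`, which
vanishes for measures of equal mass. -/
lemma klDiv_eq_informationTheory_klDiv (μ ν : Measure 𝓧) [IsFiniteMeasure μ]
    [IsFiniteMeasure ν] (h_univ : μ Set.univ = ν Set.univ) :
    klDiv μ ν = InformationTheory.klDiv μ ν := by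
  by_cases h : μ ≪ ν ∧ Integrable (llr μ ν) μ
  · rw [klDiv, if_pos h, InformationTheory.klDiv_of_ac_of_integrable h.1 h.2,
      measureReal_def, measureReal_def, h_univ, add_sub_cancel_right]
  · rw [klDiv, if_neg h, eq_comm, InformationTheory.klDiv_eq_top_iff]
    exact fun hac hint => h ⟨hac, hint⟩

lemma klDiv_compProd_le (μ ν : Measure 𝓧) [IsProbabilityMeasure μ] [IsProbabilityMeasure ν]
    (κ η : Kernel 𝓧 𝓨) [IsMarkovKernel κ] [IsMarkovKernel η] :
    klDiv (μ ⊗ₘ η) (ν ⊗ₘ η) ≤ klDiv (μ ⊗ₘ κ) (ν ⊗ₘ η) := by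
  have h_univ {P Q : Measure (𝓧 × 𝓨)} [IsProbabilityMeasure P] [IsProbabilityMeasure Q] :
      P Set.univ = Q Set.univ := by simp
  rw [klDiv_eq_informationTheory_klDiv _ _ h_univ, klDiv_eq_informationTheory_klDiv _ _ h_univ,
    InformationTheory.klDiv_compProd_left, InformationTheory.klDiv_compProd_eq_add]
  exact le_self_add

end

theorem weighted_sum_klDiv_le_general {I : Type*} [Fintype I] (w : I → ℝ≥0)
    (α β : I → Type*)
    [∀ i, MeasurableSpace (α i)]
    [∀ i, MeasurableSpace (β i)]
    (ρ σ : ∀ i, Measure (α i))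
    [∀ i, IsProbabilityMeasure (ρ i)] [∀ i, IsProbabilityMeasure (σ i)]
    (η κ : ∀ i, Kernel (α i) (β i))
    [∀ i, IsMarkovKernel (η i)] [∀ i, IsMarkovKernel (κ i)] :
    ∑ i, (w i : ℝ≥0∞) * klDiv (ρ i ⊗ₘ η i) (σ i ⊗ₘ η i) ≤
      ∑ i, (w i : ℝ≥0∞) * klDiv (ρ i ⊗ₘ κ i) (σ i ⊗ₘ η i) :=
  Finset.sum_le_sum fun _ _ => mul_le_mul_right (klDiv_compProd_le _ _ _ _) _

theorem weighted_sum_klDiv_le {I : Type*} [Fintype I] (w : I → ℝ≥0)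
    (α β : I → Type*)
    [∀ i, MeasurableSpace (α i)] [∀ i, StandardBorelSpace (α i)]
    [∀ i, MeasurableSpace (β i)] [∀ i, StandardBorelSpace (β i)]
    (ρ σ : ∀ i, Measure (α i))
    [∀ i, IsProbabilityMeasure (ρ i)] [∀ i, IsProbabilityMeasure (σ i)]
    (η κ : ∀ i, Kernel (α i) (β i))
    [∀ i, IsMarkovKernel (η i)] [∀ i, IsMarkovKernel (κ i)] :
    ∑ i, (w i : ℝ≥0∞) * klDiv (ρ i ⊗ₘ η i) (σ i ⊗ₘ η i) ≤
      ∑ i, (w i : ℝ≥0∞) * klDiv (ρ i ⊗ₘ κ i) (σ i ⊗ₘ η i) :=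
  weighted_sum_klDiv_le_general w α β ρ σ η κ
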